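/- Fix z complex with |Im(z)| < π and δ > 0 with δ < π - |Im(z)|. Then for every ξ in the set S_δ = {ξ ∈ ℂ : dist(ξ, [0,∞)) < δ}, the function G(ξ,z) = (1/(2πi)) ∑_{n≥1} ((-1)^n/n²)·(1/(1+e^{ξ/n - z}) + 1/(1+e^{-ξ/n - z})) satisfies |G(ξ,z)| ≤ max{2, π²/(3 sin(|Im(z)| + δ))}. -/

import Mathlib

/-!
Writing `c = |Im z| + δ < π`, the imaginary parts of `±ξ/n - z` lie in `[-c, c]`, so each
factor `1/(1 + e^w)` is bounded by `max 1 (1 / sin c)`: by `1` where `cos (Im w) ≥ 0`, and by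
`1/|sin (Im w)| ≤ 1/sin c` otherwise, since then `π/2 < |Im w| ≤ c < π`. Summing against
`∑ 1/n² = π²/6` bounds `|G|` by `π · max 1 (1 / sin c) / 6`, which is below the stated
maximum.
-/

open Complex

lemma one_le_norm_one_add_exp {w : ℂ} (hw : 0 ≤ Real.cos w.im) : 1 ≤ ‖1 + exp w‖ :=
  calc 1 ≤ 1 + Real.exp w.re * Real.cos w.im := le_add_of_nonneg_right (by positivity)
    _ = (1 + exp w).re := by simp [exp_re]
    _ ≤ ‖1 + exp w‖ := re_le_norm _

lemma abs_sin_im_le_norm_one_add_exp (w : ℂ) : |Real.sin w.im| ≤ ‖1 + exp w‖ := by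
  rw [norm_def]
  apply Real.abs_le_sqrt
  have hnormSq : normSq (1 + exp w) = (Real.exp w.re + Real.cos w.im) ^ 2 + Real.sin w.im ^ 2 := by
    rw [normSq_apply]
    simp only [add_re, one_re, exp_re, add_im, one_im, exp_im, zero_add]
    linear_combination (Real.exp w.re ^ 2 - 1) * Real.sin_sq_add_cos_sq w.im
  rw [hnormSq]
  nlinarith [sq_nonneg (Real.exp w.re + Real.cos w.im)]

lemma norm_one_div_one_add_exp_le {w : ℂ} {c : ℝ} (hwc : |w.im| ≤ c) (hc : c < Real.pi) :
    ‖1 / (1 + exp w)‖ ≤ max 1 (1 / Real.sin c) := by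
  rw [norm_div, norm_one]
  rcases le_or_gt 0 (Real.cos w.im) with hcos | hcos
  · exact (div_le_one_of_le₀ (one_le_norm_one_add_exp hcos) (norm_nonneg _)).trans
      (le_max_left _ _)
  · have hhalf : Real.pi / 2 < |w.im| := by
      by_contra! h
      exact hcos.not_ge (Real.cos_nonneg_of_neg_pi_div_two_le_of_le
        (by linarith [neg_abs_le w.im]) ((le_abs_self _).trans h))
    have hsin : Real.sin c ≤ |Real.sin w.im| := by
      rw [Real.abs_sin_eq_sin_abs_of_abs_le_pi (by linarith), ← Real.sin_pi_sub,
        ← Real.sin_pi_sub |w.im|]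
      exact Real.sin_le_sin_of_le_of_le_pi_div_two (by linarith) (by linarith) (by linarith)
    have hsin_pos : 0 < Real.sin c := Real.sin_pos_of_pos_of_lt_pi (by linarith) hc
    exact le_max_of_le_right <| one_div_le_one_div_of_le hsin_pos <|
      hsin.trans (abs_sin_im_le_norm_one_add_exp w)

lemma abs_im_le_infDist {s : Set ℂ} (hs : s.Nonempty) (hs_real : ∀ w ∈ s, w.im = 0)
    (ξ : ℂ) :
    |ξ.im| ≤ Metric.infDist ξ s := by
  refine (Metric.le_infDist hs).2 fun w hw => ?_
  calc |ξ.im| = |(ξ - w).im| := by simp [hs_real w hw]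
    _ ≤ dist ξ w := by rw [dist_eq]; exact abs_im_le_norm _

lemma abs_im_div_natCast_add_one_sub_le (ξ z : ℂ) (n : ℕ) :
    |(ξ / ((n : ℂ) + 1) - z).im| ≤ |ξ.im| + |z.im| := by
  have hcast : (n : ℂ) + 1 = ((n + 1 : ℝ) : ℂ) := by push_cast; rfl
  rw [hcast, sub_im, div_ofReal_im]
  refine (abs_sub _ _).trans (add_le_add_left ?_ _)
  rw [abs_div, abs_of_pos (by positivity : (0 : ℝ) < n + 1)]
  exact div_le_self (abs_nonneg _) (by simp)

lemma norm_tsum_neg_one_pow_div_sq_mul_le {f : ℕ → ℂ} {M : ℝ} (hf : ∀ n, ‖f n‖ ≤ M) :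
    ‖∑' n : ℕ, ((-1 : ℂ) ^ (n + 1) / ((n : ℂ) + 1) ^ 2) * f n‖ ≤ Real.pi ^ 2 / 6 * M := by
  have hzeta : HasSum (fun n : ℕ => 1 / ((n : ℝ) + 1) ^ 2) (Real.pi ^ 2 / 6) := by
    simpa using (hasSum_nat_add_iff' 1).2 hasSum_zeta_two
  refine tsum_of_norm_bounded (hzeta.mul_right M) fun n => ?_
  have hcoeff : ‖(-1 : ℂ) ^ (n + 1) / ((n : ℂ) + 1) ^ 2‖ = 1 / ((n : ℝ) + 1) ^ 2 := by
    rw [norm_div, norm_pow, norm_pow, norm_neg, norm_one, one_pow]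
    norm_cast
  rw [norm_mul, hcoeff]
  gcongr
  exact hf n

lemma pi_mul_max_one_one_div_div_six_le (s : ℝ) :
    Real.pi * max 1 (1 / s) / 6 ≤ max 2 (Real.pi ^ 2 / (3 * s)) := by
  rcases le_total (1 / s) 1 with hs | hs
  · rw [max_eq_left hs]
    exact le_max_of_le_left (by linarith [Real.pi_lt_four])
  · have hs0 : 0 < s := one_div_pos.1 (zero_lt_one.trans_le hs)
    rw [max_eq_right hs]
    refine le_max_of_le_right ?_
    rw [div_le_div_iff₀ (by norm_num) (by positivity)]
    field_simp
    nlinarith [Real.pi_gt_three]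

theorem stmt_9_general (z : ℂ) (δ : ℝ) (hzδ : δ < Real.pi - |z.im|)
    (ξ : ℂ)
    (hξ : Metric.infDist ξ {w : ℂ | ∃ r : ℝ, 0 ≤ r ∧ w = (r : ℂ)} < δ) :
    ‖(1 / (2 * Real.pi * Complex.I)) *
        ∑' n : ℕ, ((-1 : ℂ) ^ (n + 1) / ((n : ℂ) + 1) ^ 2) *
          (1 / (1 + Complex.exp (ξ / ((n : ℂ) + 1) - z)) +
           1 / (1 + Complex.exp (-ξ / ((n : ℂ) + 1) - z)))‖
      ≤ max 2 (Real.pi ^ 2 / (3 * Real.sin (|z.im| + δ))) := by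
  set B := max 1 (1 / Real.sin (|z.im| + δ))
  have hξ_im : |ξ.im| < δ := by
    refine (abs_im_le_infDist ?_ ?_ ξ).trans_lt hξ
    · exact ⟨0, 0, le_rfl, by simp⟩
    · rintro _ ⟨r, -, rfl⟩
      exact ofReal_im r
  have hterm (ζ : ℂ) (hζ : |ζ.im| = |ξ.im|) (n : ℕ) :
      ‖1 / (1 + exp (ζ / ((n : ℂ) + 1) - z))‖ ≤ B :=
    norm_one_div_one_add_exp_le
      ((abs_im_div_natCast_add_one_sub_le ζ z n).trans (by linarith)) (by linarith)
  have hsum (n : ℕ) : ‖1 / (1 + exp (ξ / ((n : ℂ) + 1) - z)) +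
      1 / (1 + exp (-ξ / ((n : ℂ) + 1) - z))‖ ≤ 2 * B :=
    (norm_add_le _ _).trans (by linarith [hterm ξ rfl n, hterm (-ξ) (by simp) n])
  calc _ = 1 / (2 * Real.pi) * ‖∑' n : ℕ, ((-1 : ℂ) ^ (n + 1) / ((n : ℂ) + 1) ^ 2) *
          (1 / (1 + exp (ξ / ((n : ℂ) + 1) - z)) +
            1 / (1 + exp (-ξ / ((n : ℂ) + 1) - z)))‖ := by
        simp [abs_of_pos Real.pi_pos]
    _ ≤ 1 / (2 * Real.pi) * (Real.pi ^ 2 / 6 * (2 * B)) := by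
        gcongr
        exact norm_tsum_neg_one_pow_div_sq_mul_le hsum
    _ = Real.pi * B / 6 := by field_simp
    _ ≤ _ := pi_mul_max_one_one_div_div_six_le _

theorem stmt_9 (z : ℂ) (δ : ℝ) (hδ : 0 < δ) (hzδ : δ < Real.pi - |z.im|)
    (ξ : ℂ)
    (hξ : Metric.infDist ξ {w : ℂ | ∃ r : ℝ, 0 ≤ r ∧ w = (r : ℂ)} < δ) :
    ‖(1 / (2 * Real.pi * Complex.I)) *
        ∑' n : ℕ, ((-1 : ℂ) ^ (n + 1) / ((n : ℂ) + 1) ^ 2) *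
          (1 / (1 + Complex.exp (ξ / ((n : ℂ) + 1) - z)) +
           1 / (1 + Complex.exp (-ξ / ((n : ℂ) + 1) - z)))‖
      ≤ max 2 (Real.pi ^ 2 / (3 * Real.sin (|z.im| + δ))) :=
  stmt_9_general z δ hzδ ξ hξ
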